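/- Let T > 0, γ > 0, r > 0, σ_F > 0, μ_F ∈ ℝ, F₀ > 0, V̄ > 0 and ψ > 0. Let W_T be a Gaussian random variable with mean 0 and variance T, and define Z̃(T) := exp(−(r + γ²/2)T − γ W_T) and F(T) := F₀ · exp((μ_F − σ_F²/2)T + σ_F W_T). Then the price of the put option with payoff (V̄ − ψ F(T))⁺ satisfies E[Z̃(T) · max(V̄ − ψ F(T), 0)] = V̄ · ξ(T, 0, 1, 1, (ψ F₀ h(0,T)/V̄)^(γ/σ_F), +∞) − ψ F₀ h(0,T) · ξ(T, 0, 1, 1 − σ_F/γ, (ψ F₀ h(0,T)/V̄)^(γ/σ_F), +∞). -/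
import Mathlib


open MeasureTheory ProbabilityTheory

open scoped ENNReal NNReal

/-- Cumulative distribution function of the standard normal distribution. -/
noncomputable def Phi (x : ℝ) : ℝ := ((gaussianReal 0 1) (Set.Iic x)).toReal

lemma gaussianReal_Iic_toReal (m : ℝ) (v : ℝ≥0) (hv : v ≠ 0) (u : ℝ) :
    (gaussianReal m v (Set.Iic u)).toReal = Phi ((u - m) / Real.sqrt v) := by
  have hv' : 0 < (v : ℝ) := by positivity
  have hs : 0 < Real.sqrt v := Real.sqrt_pos.mpr hv'
  have h1 : (gaussianReal 0 1).map (fun x => Real.sqrt v * x) = gaussianReal 0 v := by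
    have := gaussianReal_map_const_mul (μ := 0) (v := 1) (Real.sqrt v)
    simp only [mul_zero] at this
    convert this using 2
    ext
    simp [Real.sq_sqrt hv'.le]
  have h2 : (gaussianReal 0 v).map (· + m) = gaussianReal m v := by
    have := gaussianReal_map_add_const (μ := 0) (v := v) m
    simpa using this
  have hmeas : Measurable fun x : ℝ => Real.sqrt v * x + m :=
    (measurable_id.const_mul _).add_const m
  have h3 : (gaussianReal 0 1).map (fun x => Real.sqrt v * x + m) = gaussianReal m v := by
    rw [← h2, ← h1,
      Measure.map_map (f := fun x : ℝ => Real.sqrt v * x) (g := fun x : ℝ => x + m)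
        (measurable_id.add_const m) (measurable_id.const_mul _)]
    rfl
  have h4 : (fun x : ℝ => Real.sqrt v * x + m) ⁻¹' (Set.Iic u) = Set.Iic ((u - m) / Real.sqrt v) := by
    ext x
    simp only [Set.mem_preimage, Set.mem_Iic]
    rw [le_div_iff₀ hs, mul_comm x]
    constructor <;> intro h <;> linarith
  rw [← h3, Measure.map_apply hmeas measurableSet_Iic, h4, Phi]

lemma exp_mul_gaussianPDFReal (v : ℝ≥0) (hv : v ≠ 0) (c x : ℝ) :
    Real.exp (c * x) * gaussianPDFReal 0 v x
      = Real.exp (c ^ 2 * v / 2) * gaussianPDFReal (c * v) v x := by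
  have hv' : (v : ℝ) ≠ 0 := by positivity
  simp only [gaussianPDFReal]
  rw [mul_comm (Real.exp (c * x)), mul_assoc, ← Real.exp_add, mul_left_comm, ← Real.exp_add]
  congr 1
  field_simp
  ring

lemma integrable_exp_mul_gaussianPDFReal (v : ℝ≥0) (hv : v ≠ 0) (c : ℝ) :
    Integrable (fun x => Real.exp (c * x) * gaussianPDFReal 0 v x) := by
  simp_rw [exp_mul_gaussianPDFReal v hv c]
  exact (integrable_gaussianPDFReal _ _).const_mul _

lemma integral_Iic_exp_mul_gaussianPDFReal (v : ℝ≥0) (hv : v ≠ 0) (c u : ℝ) :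
    ∫ x in Set.Iic u, Real.exp (c * x) * gaussianPDFReal 0 v x
      = Real.exp (c ^ 2 * v / 2) * Phi ((u - c * v) / Real.sqrt v) := by
  simp_rw [exp_mul_gaussianPDFReal v hv c]
  rw [MeasureTheory.integral_const_mul]
  congr 1
  rw [← gaussianReal_Iic_toReal (c * v) v hv u, gaussianReal_apply_eq_integral _ hv,
    ENNReal.toReal_ofReal (integral_nonneg fun x => gaussianPDFReal_nonneg _ _ _)]

/-- `Φ(d̄(x) + kγ√(s − t))`, where `d̄(x) = (ln(z/x) − (r + γ²/2)(s − t)) / (γ √(s − t))`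
for `x ∈ (0, ∞)`, with the conventions `Φ(d̄(0) + u) = 1` and `Φ(d̄(∞) + u) = 0`. -/
noncomputable def PhiDbar (γ r s t z k : ℝ) (x : ℝ≥0∞) : ℝ :=
  if x = 0 then 1
  else if x = ⊤ then 0
  else Phi ((Real.log (z / x.toReal) - (r + γ ^ 2 / 2) * (s - t)) / (γ * Real.sqrt (s - t))
      + k * γ * Real.sqrt (s - t))

/-- `ξ(s, t, z, k, a, b; γ, r)`. -/
noncomputable def xi (γ r s t z k : ℝ) (a b : ℝ≥0∞) : ℝ :=
  z ^ k * Real.exp (-k * (r + γ ^ 2 / 2) * (s - t) + k ^ 2 * γ ^ 2 / 2 * (s - t)) *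
    (PhiDbar γ r s t z k a - PhiDbar γ r s t z k b) * (if a < b then 1 else 0)

/-- `h(t₁, t₂) = exp((μ_F − σ_F²/2 − σ_F r/γ − σ_F γ/2)(t₂ − t₁))`. -/
noncomputable def hF (γ r μF σF t₁ t₂ : ℝ) : ℝ :=
  Real.exp ((μF - σF ^ 2 / 2 - σF * r / γ - σF * γ / 2) * (t₂ - t₁))

theorem put_on_fixed_term_asset_price
    (T γ r σF μF F₀ V ψ : ℝ)
    (hT : 0 < T) (hγ : 0 < γ) (hr : 0 < r) (hσF : 0 < σF) (hF₀ : 0 < F₀)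
    (hV : 0 < V) (hψ : 0 < ψ) :
    (∫ w, Real.exp (-(r + γ ^ 2 / 2) * T - γ * w) *
        max (V - ψ * (F₀ * Real.exp ((μF - σF ^ 2 / 2) * T + σF * w))) 0
        ∂(gaussianReal 0 (Real.toNNReal T)))
      = V * xi γ r T 0 1 1
            (ENNReal.ofReal ((ψ * F₀ * hF γ r μF σF 0 T / V) ^ (γ / σF))) ⊤
        - ψ * F₀ * hF γ r μF σF 0 T * xi γ r T 0 1 (1 - σF / γ)
            (ENNReal.ofReal ((ψ * F₀ * hF γ r μF σF 0 T / V) ^ (γ / σF))) ⊤ := by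
  have hγ' : γ ≠ 0 := hγ.ne'
  have hσF' : σF ≠ 0 := hσF.ne'
  set v : ℝ≥0 := Real.toNNReal T with hvdef
  have hv : v ≠ 0 := (Real.toNNReal_pos.mpr hT).ne'
  have hvT : (v : ℝ) = T := Real.coe_toNNReal T hT.le
  have hs : 0 < Real.sqrt T := Real.sqrt_pos.mpr hT
  set A : ℝ := ψ * F₀ * Real.exp ((μF - σF ^ 2 / 2) * T) with hAdef
  have hA : 0 < A := by positivity
  set u : ℝ := Real.log (V / A) / σF with hudef
  have hpdf_meas : Measurable fun x => Real.toNNReal (gaussianPDFReal 0 v x) :=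
    (measurable_gaussianPDFReal 0 v).real_toNNReal
  -- Step 1: convert to a Lebesgue integral against the density
  have hLHS : (∫ w, Real.exp (-(r + γ ^ 2 / 2) * T - γ * w) *
        max (V - ψ * (F₀ * Real.exp ((μF - σF ^ 2 / 2) * T + σF * w))) 0
        ∂(gaussianReal 0 v))
      = ∫ x, gaussianPDFReal 0 v x * (Real.exp (-(r + γ ^ 2 / 2) * T - γ * x) *
          max (V - ψ * (F₀ * Real.exp ((μF - σF ^ 2 / 2) * T + σF * x))) 0) := by
    rw [gaussianReal_of_var_ne_zero 0 hv,
      show gaussianPDF 0 v = fun x => ((Real.toNNReal (gaussianPDFReal 0 v x) : ℝ≥0) : ℝ≥0∞)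
        from rfl,
      integral_withDensity_eq_integral_smul hpdf_meas]
    congr 1
    ext x
    rw [NNReal.smul_def, Real.coe_toNNReal _ (gaussianPDFReal_nonneg _ _ _), smul_eq_mul]
  -- Step 2: indicator form
  have hkey : ∀ x : ℝ, gaussianPDFReal 0 v x * (Real.exp (-(r + γ ^ 2 / 2) * T - γ * x) *
        max (V - ψ * (F₀ * Real.exp ((μF - σF ^ 2 / 2) * T + σF * x))) 0)
      = Set.indicator (Set.Iic u)
          (fun x => (V * Real.exp (-(r + γ ^ 2 / 2) * T)) *
              (Real.exp (-γ * x) * gaussianPDFReal 0 v x)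
            - (A * Real.exp (-(r + γ ^ 2 / 2) * T)) *
              (Real.exp ((σF - γ) * x) * gaussianPDFReal 0 v x)) x := by
    intro x
    have hAe : ψ * (F₀ * Real.exp ((μF - σF ^ 2 / 2) * T + σF * x)) = A * Real.exp (σF * x) := by
      rw [hAdef, Real.exp_add]; ring
    have hAu : A * Real.exp (σF * u) = V := by
      rw [hudef, mul_div_cancel₀ _ hσF', Real.exp_log (by positivity)]
      field_simp
    have e1 : Real.exp (-(r + γ ^ 2 / 2) * T - γ * x)
        = Real.exp (-(r + γ ^ 2 / 2) * T) * Real.exp (-γ * x) := by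
      rw [← Real.exp_add]; ring_nf
    have e2 : Real.exp ((σF - γ) * x) = Real.exp (σF * x) * Real.exp (-γ * x) := by
      rw [← Real.exp_add]; ring_nf
    by_cases hx : x ∈ Set.Iic u
    · rw [Set.indicator_of_mem hx]
      have hle : A * Real.exp (σF * x) ≤ V := by
        rw [← hAu]
        exact mul_le_mul_of_nonneg_left
          (Real.exp_le_exp.mpr (mul_le_mul_of_nonneg_left hx hσF.le)) hA.le
      rw [hAe, max_eq_left (by linarith), e1, e2]
      ring
    · rw [Set.indicator_of_notMem hx, hAe]
      have hx' : u < x := not_le.mp hx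
      have hge : V ≤ A * Real.exp (σF * x) := by
        rw [← hAu]
        exact mul_le_mul_of_nonneg_left
          (Real.exp_le_exp.mpr (by nlinarith)) hA.le
      rw [max_eq_right (by linarith)]
      ring
  rw [hLHS]
  simp only [hkey]
  rw [MeasureTheory.integral_indicator measurableSet_Iic,
    MeasureTheory.integral_sub
      (((integrable_exp_mul_gaussianPDFReal v hv (-γ)).const_mul _).integrableOn)
      (((integrable_exp_mul_gaussianPDFReal v hv (σF - γ)).const_mul _).integrableOn),
    MeasureTheory.integral_const_mul, MeasureTheory.integral_const_mul,
    integral_Iic_exp_mul_gaussianPDFReal v hv (-γ) u,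
    integral_Iic_exp_mul_gaussianPDFReal v hv (σF - γ) u, hvT]
  -- Step 3: compute the right-hand side
  have hq : hF γ r μF σF 0 T = Real.exp ((μF - σF ^ 2 / 2 - σF * r / γ - σF * γ / 2) * T) := by
    rw [hF, sub_zero]
  set B : ℝ := ψ * F₀ * hF γ r μF σF 0 T / V with hBdef
  have hBpos : 0 < B := by rw [hBdef, hq]; positivity
  have ha0 : ENNReal.ofReal (B ^ (γ / σF)) ≠ 0 :=
    (ENNReal.ofReal_pos.mpr (Real.rpow_pos_of_pos hBpos _)).ne'
  have hatop : ENNReal.ofReal (B ^ (γ / σF)) ≠ ⊤ := ENNReal.ofReal_ne_top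
  have haR : (ENNReal.ofReal (B ^ (γ / σF))).toReal = B ^ (γ / σF) :=
    ENNReal.toReal_ofReal (Real.rpow_pos_of_pos hBpos _).le
  have halt : ENNReal.ofReal (B ^ (γ / σF)) < ⊤ := lt_top_iff_ne_top.mpr hatop
  simp only [xi, PhiDbar, haR, if_neg ha0, if_neg hatop, if_pos halt, sub_zero,
    ENNReal.top_ne_zero, if_false, if_true, Real.one_rpow, one_mul, mul_one,
    ite_true, ite_false]
  have hlog : Real.log (1 / B ^ (γ / σF)) = -(γ / σF * Real.log B) := by
    rw [one_div, Real.log_inv, Real.log_rpow hBpos]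
  have hlogB : Real.log B
      = Real.log ψ + Real.log F₀ + (μF - σF ^ 2 / 2 - σF * r / γ - σF * γ / 2) * T
        - Real.log V := by
    rw [hBdef, hq, Real.log_div (by positivity) hV.ne',
      Real.log_mul (by positivity) (Real.exp_ne_zero _), Real.log_mul hψ.ne' hF₀.ne',
      Real.log_exp]
  have huu : u = (Real.log V - (Real.log ψ + Real.log F₀ + (μF - σF ^ 2 / 2) * T)) / σF := by
    rw [hudef, Real.log_div hV.ne' hA.ne', hAdef,
      Real.log_mul (by positivity) (Real.exp_ne_zero _), Real.log_mul hψ.ne' hF₀.ne',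
      Real.log_exp]
  have harg1 : (Real.log (1 / B ^ (γ / σF)) - (r + γ ^ 2 / 2) * T) / (γ * Real.sqrt T)
      + γ * Real.sqrt T = (u - -γ * T) / Real.sqrt T := by
    rw [hlog, hlogB, huu]
    generalize hsdef : Real.sqrt T = s
    have hTs : T = s ^ 2 := by rw [← hsdef]; exact (Real.sq_sqrt hT.le).symm
    have hs' : 0 < s := by rw [← hsdef]; exact hs
    rw [hTs]
    field_simp
    ring
  have harg2 : (Real.log (1 / B ^ (γ / σF)) - (r + γ ^ 2 / 2) * T) / (γ * Real.sqrt T)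
      + (1 - σF / γ) * γ * Real.sqrt T = (u - (σF - γ) * T) / Real.sqrt T := by
    rw [hlog, hlogB, huu]
    generalize hsdef : Real.sqrt T = s
    have hTs : T = s ^ 2 := by rw [← hsdef]; exact (Real.sq_sqrt hT.le).symm
    have hs' : 0 < s := by rw [← hsdef]; exact hs
    rw [hTs]
    field_simp
    ring
  rw [harg1, harg2]
  have hc1 : Real.exp (-(r + γ ^ 2 / 2) * T) * Real.exp ((-γ) ^ 2 * T / 2)
      = Real.exp (-1 * (r + γ ^ 2 / 2) * T + 1 ^ 2 * γ ^ 2 / 2 * T) := by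
    rw [← Real.exp_add]; ring_nf
  have hc2 : A * (Real.exp (-(r + γ ^ 2 / 2) * T) * Real.exp ((σF - γ) ^ 2 * T / 2))
      = ψ * F₀ * hF γ r μF σF 0 T
        * Real.exp (-(1 - σF / γ) * (r + γ ^ 2 / 2) * T
            + (1 - σF / γ) ^ 2 * γ ^ 2 / 2 * T) := by
    have hexp : ∀ a b : ℝ, Real.exp a * Real.exp b = Real.exp (a + b) :=
      fun a b => (Real.exp_add a b).symm
    rw [hq, hAdef, hexp, mul_assoc (ψ * F₀), hexp, mul_assoc (ψ * F₀), hexp]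
    congr 1
    rw [Real.exp_eq_exp]
    field_simp
    ring
  linear_combination (V * Phi ((u - -γ * T) / Real.sqrt T)) * hc1
    - Phi ((u - (σF - γ) * T) / Real.sqrt T) * hc2
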